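/- arXiv:1811.11444 — 2 statements merged into one kernel-verified Lean document; each statement's English description precedes it below -/
import Mathlib

section
/- For every integer m ≥ 1 and every integer i with f_m + 1 ≤ i ≤ f_{m+1} + 1, let w = K_{m+1}[i, f_{m+1}] · K_m · K_{m+1}[1, i − f_m − 1], a word of length f_{m+1}. Then ww = K_{m+5}[f_{m+2}+i, f_{m+3}+f_{m+1}+i−1]; in particular, since every kernel word K_m is a factor of the Fibonacci word F, the square ww is a factor of F. -/
/-- Fibonacci numbers: `fn 0 = 1`, `fn 1 = 2`, `fn (m+2) = fn (m+1) + fn m`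
(so `fn m` is the paper's `f_m`; also `f_{m-1} = Nat.fib (m+1)` etc.). -/
def fn (m : ℕ) : ℕ := Nat.fib (m + 2)

/-- Finite Fibonacci words `Fw m = σ^m(a)` for the morphism σ(a)=ab, σ(b)=a,
with `a := false`, `b := true`; equivalently `Fw (m+2) = Fw (m+1) ++ Fw m`. -/
def Fw : ℕ → List Bool
  | 0 => [false]
  | 1 => [false, true]
  | m + 2 => Fw (m + 1) ++ Fw m

/-- The infinite Fibonacci word (0-indexed): the fixed point of σ beginning with `a`. -/
def fibWord (i : ℕ) : Bool := (Fw (i + 1)).getD i false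

/-- `fFactor i n = F[i;n]`, the factor of length `n` of the Fibonacci word
beginning at (1-indexed) position `i`. -/
def fFactor (i n : ℕ) : List Bool := (List.range n).map fun t => fibWord (i - 1 + t)

/-- `w` occurs as a factor of the infinite Fibonacci word. -/
def IsFactorF (w : List Bool) : Prop := ∃ i : ℕ, 1 ≤ i ∧ w = fFactor i w.length

/-- `D2 i n`: the number of distinct squares occurring as factors of `F[i;n]`. -/
noncomputable def D2 (i n : ℕ) : ℕ :=
  {w : List Bool | w ≠ [] ∧ (w ++ w) <:+: fFactor i n}.ncard

/-- The kernel word `K_m` (`m ≥ 0`): the last letter of `F_{m+1}` followed by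
`F_m` with its last letter removed. -/
def kerW (m : ℕ) : List Bool := (Fw (m + 1)).getLast! :: (Fw m).dropLast

/-- `sliceF u i j = u[i,j]`, the (1-indexed) factor of `u` from position `i` to `j`,
with `u[i,i-1] = ε`. -/
def sliceF (u : List Bool) (i j : ℕ) : List Bool := (u.drop (i - 1)).take (j + 1 - i)

/-!
Read as a factor of `F` (indexed from `0`), `K_k = F[f_{k+1} - 1, f_{k+2} - 1)` straddles the
boundary in `F_{k+2} = F_{k+1} F_k`. Two self-similarities of `F` then do all the work:
`F[f_{k+1} + u] = F[u]` for `u < f_k`, and the period `f_k` of the prefix of length `f_{k+2} - 2`.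
With them, `w` is the factor of length `f_{m+1}` at `f_{m+2} + i - 2`. It is followed by a copy of
itself because the period `f_k` fails only at positions `f_{k+1} - 2, f_{k+1} - 1` and then holds up
to `f_{k+3} - 3`. Finally, the occurrence of `ww` in `K_{m+5}` is the same factor shifted by
`f_{m+6}`.
-/

lemma fn_add_two (k : ℕ) : fn (k + 2) = fn (k + 1) + fn k := Nat.fib_add_two.trans (add_comm _ _)

lemma fn_pos (k : ℕ) : 0 < fn k := Nat.fib_pos.2 (by omega)

lemma fn_le_fn_succ (k : ℕ) : fn k ≤ fn (k + 1) := Nat.fib_mono (by omega)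

lemma lt_fn_self (k : ℕ) : k < fn k := by
  have := Nat.le_fib_add_one (k + 2)
  unfold fn; omega

lemma length_Fw (k : ℕ) : (Fw k).length = fn k := by
  induction k using Nat.strong_induction_on with
  | _ k ih =>
    match k with
    | 0 => rfl
    | 1 => rfl
    | n + 2 => simp [Fw, ih (n + 1) (by omega), ih n (by omega), fn_add_two]

lemma Fw_prefix_Fw_succ : ∀ k : ℕ, Fw k <+: Fw (k + 1)
  | 0 => ⟨[true], rfl⟩
  | n + 1 => ⟨Fw n, rfl⟩

lemma Fw_prefix_Fw {k n : ℕ} (h : k ≤ n) : Fw k <+: Fw n := by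
  induction n, h using Nat.le_induction with
  | base => exact List.prefix_refl _
  | succ n _ ih => exact ih.trans (Fw_prefix_Fw_succ n)

lemma fibWord_eq_getElem_Fw {k j : ℕ} (h : j < fn k) :
    fibWord j = (Fw k)[j]'(by rw [length_Fw]; exact h) := by
  have hj : j < (Fw (j + 1)).length := by
    rw [length_Fw]; exact (lt_fn_self j).trans_le (fn_le_fn_succ j)
  rw [fibWord, List.getD_eq_getElem _ _ hj]
  rcases Nat.le_total (j + 1) k with hk | hk
  · exact (Fw_prefix_Fw hk).getElem hj
  · exact ((Fw_prefix_Fw hk).getElem _).symm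

lemma fibWord_fn_succ_add {k u : ℕ} (hu : u < fn k) : fibWord (fn (k + 1) + u) = fibWord u := by
  have h : fn (k + 1) + u < fn (k + 2) := by rw [fn_add_two]; omega
  rw [fibWord_eq_getElem_Fw h, fibWord_eq_getElem_Fw hu]
  have hlen : (Fw (k + 1)).length ≤ fn (k + 1) + u := by rw [length_Fw]; omega
  simp only [Fw, List.getElem_append_right hlen, length_Fw, Nat.add_sub_cancel_left]

lemma fibWord_fn_add {k u : ℕ} (hu : u + 3 ≤ fn (k + 1)) : fibWord (fn k + u) = fibWord u := by
  induction k generalizing u with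
  | zero => exact absurd hu (by change ¬u + 3 ≤ 2; omega)
  | succ k ih =>
    change u + 3 ≤ fn (k + 2) at hu
    have hk := fn_add_two k
    rcases Nat.lt_or_ge u (fn k) with h | h
    · exact fibWord_fn_succ_add h
    · obtain ⟨v, rfl⟩ : ∃ v, u = fn k + v := ⟨u - fn k, by omega⟩
      rw [← add_assoc, ← hk, fibWord_fn_succ_add (by omega), ih (by omega)]

lemma fibWord_add_fn {k q : ℕ} (h₁ : fn (k + 1) ≤ q) (h₂ : q + 3 ≤ fn (k + 3)) :
    fibWord (q + fn k) = fibWord q := by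
  have hk : fn (k + 2) = fn (k + 1) + fn k := fn_add_two k
  have hk1 : fn (k + 3) = fn (k + 2) + fn (k + 1) := fn_add_two (k + 1)
  obtain ⟨u, rfl⟩ : ∃ u, q = fn (k + 1) + u := ⟨q - fn (k + 1), by omega⟩
  rcases Nat.lt_or_ge u (fn k) with h | h
  · calc fibWord (fn (k + 1) + u + fn k) = fibWord (fn (k + 2) + u) := by congr 1; omega
      _ = fibWord u := fibWord_fn_succ_add (h.trans_le (fn_le_fn_succ k))
      _ = fibWord (fn (k + 1) + u) := (fibWord_fn_succ_add h).symm
  · obtain ⟨v, rfl⟩ : ∃ v, u = fn k + v := ⟨u - fn k, by omega⟩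
    calc fibWord (fn (k + 1) + (fn k + v) + fn k) = fibWord (fn (k + 2) + (fn k + v)) := by
          congr 1; omega
      _ = fibWord (fn k + v) := fibWord_fn_add (by show _ ≤ fn (k + 3); omega)
      _ = fibWord v := fibWord_fn_add (by omega)
      _ = fibWord (fn (k + 2) + v) := (fibWord_fn_succ_add (by omega)).symm
      _ = fibWord (fn (k + 1) + (fn k + v)) := by congr 1; omega

/-- `F[p, p + n)`, indexed from `0` (unlike `fFactor`). -/
def fibFactor (p n : ℕ) : List Bool := (List.range n).map fun t => fibWord (p + t)

@[simp] lemma length_fibFactor (p n : ℕ) : (fibFactor p n).length = n := by simp [fibFactor]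

lemma fibFactor_add (p a b : ℕ) : fibFactor p (a + b) = fibFactor p a ++ fibFactor (p + a) b := by
  simp [fibFactor, List.range_add, Function.comp_def, add_assoc]

lemma fibFactor_congr {p q n : ℕ} (h : ∀ t < n, fibWord (p + t) = fibWord (q + t)) :
    fibFactor p n = fibFactor q n :=
  List.map_congr_left fun t ht => h t (List.mem_range.mp ht)

lemma fibFactor_fn_succ_add {k p n : ℕ} (h : p + n ≤ fn k) :
    fibFactor (fn (k + 1) + p) n = fibFactor p n :=
  fibFactor_congr fun t ht => by rw [add_assoc]; exact fibWord_fn_succ_add (by omega)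

lemma fibFactor_fn_add {k p n : ℕ} (h : p + n + 2 ≤ fn (k + 1)) :
    fibFactor (fn k + p) n = fibFactor p n :=
  fibFactor_congr fun t ht => by rw [add_assoc]; exact fibWord_fn_add (by omega)

lemma fibFactor_append_self {k p : ℕ} (h₁ : fn (k + 1) ≤ p) (h₂ : p + fn k + 2 ≤ fn (k + 3)) :
    fibFactor p (fn k) ++ fibFactor p (fn k) = fibFactor p (2 * fn k) := by
  rw [two_mul, fibFactor_add]
  congr 1
  refine fibFactor_congr fun t ht => ?_
  rw [add_right_comm]
  exact (fibWord_add_fn (by omega) (by omega)).symm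

lemma isFactorF_fibFactor (p n : ℕ) : IsFactorF (fibFactor p n) :=
  ⟨p + 1, by omega, by simp [fFactor, fibFactor]⟩

lemma sliceF_fibFactor {p n a b : ℕ} (ha : 1 ≤ a) (hb : b ≤ n) :
    sliceF (fibFactor p n) a b = fibFactor (p + a - 1) (b + 1 - a) := by
  refine List.ext_getElem (by simp [sliceF]; omega) fun t _ _ => ?_
  simp only [sliceF, fibFactor, List.getElem_take, List.getElem_drop, List.getElem_map,
    List.getElem_range]
  congr 1
  omega

lemma Fw_eq_fibFactor (k : ℕ) : Fw k = fibFactor 0 (fn k) :=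
  List.ext_getElem (by simp [length_Fw]) fun j h _ => by
    simp [fibFactor, fibWord_eq_getElem_Fw (k := k) (by rwa [length_Fw] at h)]

lemma kerW_eq_fibFactor (k : ℕ) : kerW k = fibFactor (fn (k + 1) - 1) (fn k) := by
  obtain ⟨a, ha⟩ : ∃ a, fn (k + 1) = a + 1 := ⟨_, (Nat.succ_pred_eq_of_pos (fn_pos _)).symm⟩
  obtain ⟨b, hb⟩ : ∃ b, fn k = b + 1 := ⟨_, (Nat.succ_pred_eq_of_pos (fn_pos _)).symm⟩
  have hshift : fibFactor (a + 1) b = fibFactor 0 b := by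
    simpa [ha] using fibFactor_fn_succ_add (k := k) (p := 0) (n := b) (by omega)
  rw [kerW, Fw_eq_fibFactor, Fw_eq_fibFactor, ha, hb, fibFactor_add 0 a 1, fibFactor_add 0 b 1,
    Nat.add_sub_cancel, add_comm b 1, fibFactor_add a 1 b, hshift]
  simp [fibFactor]

lemma sliceF_kerW {k a b : ℕ} (ha : 1 ≤ a) (hb : b ≤ fn k) :
    sliceF (kerW k) a b = fibFactor (fn (k + 1) + a - 2) (b + 1 - a) := by
  rw [kerW_eq_fibFactor, sliceF_fibFactor ha hb]
  have := fn_pos (k + 1)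
  congr 1
  omega

/-- `K_k K_{k+1}` is the factor `F[f_{k+1} - 1, f_{k+3} - 1)`, and the period `f_{k+2}` of the
prefix of `F` carries its `K_k` to the end of `K_{k+1}`. -/
lemma kerW_rotation_eq_fibFactor {k i : ℕ} (h₁ : fn k + 1 ≤ i) (h₂ : i ≤ fn (k + 1) + 1) :
    sliceF (kerW (k + 1)) i (fn (k + 1)) ++ kerW k ++ sliceF (kerW (k + 1)) 1 (i - fn k - 1) =
      fibFactor (fn (k + 2) + i - 2) (fn (k + 1)) := by
  have hk : fn (k + 2) = fn (k + 1) + fn k := fn_add_two k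
  have hk1 : fn (k + 3) = fn (k + 2) + fn (k + 1) := fn_add_two (k + 1)
  have hk' : fn (k + 1 + 1) = fn (k + 2) := rfl
  have := fn_pos k
  have hadj : kerW k ++ sliceF (kerW (k + 1)) 1 (i - fn k - 1) =
      fibFactor (fn (k + 1) - 1) (i - 1) := by
    rw [kerW_eq_fibFactor, sliceF_kerW le_rfl (by omega),
      show i - 1 = fn k + (i - fn k - 1) by omega, fibFactor_add]
    congr 2; omega
  have hshift : fibFactor (fn (k + 1) - 1) (i - 1) = fibFactor (fn (k + 3) - 1) (i - 1) := by
    rw [show fn (k + 3) - 1 = fn (k + 2) + (fn (k + 1) - 1) by omega,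
      fibFactor_fn_add (by show _ ≤ fn (k + 3); omega)]
  rw [List.append_assoc, hadj, hshift, sliceF_kerW (by omega) le_rfl,
    show fn (k + 1) = (fn (k + 1) + 1 - i) + (i - 1) by omega, fibFactor_add]
  congr 2 <;> omega

theorem square_case_two_general (m i : ℕ)
    (h2 : fn m + 1 ≤ i) (hi : i ≤ fn (m + 1) + 1)
    (w : List Bool)
    (hw : w = sliceF (kerW (m + 1)) i (fn (m + 1)) ++ kerW m ++
        sliceF (kerW (m + 1)) 1 (i - fn m - 1)) :
    w.length = fn (m + 1) ∧
    w ++ w = sliceF (kerW (m + 5)) (fn (m + 2) + i) (fn (m + 3) + fn (m + 1) + i - 1) ∧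
    IsFactorF (w ++ w) := by
  have f2 : fn (m + 2) = fn (m + 1) + fn m := fn_add_two m
  have f3 : fn (m + 3) = fn (m + 2) + fn (m + 1) := fn_add_two (m + 1)
  have f4 : fn (m + 4) = fn (m + 3) + fn (m + 2) := fn_add_two (m + 2)
  have f5 : fn (m + 5) = fn (m + 4) + fn (m + 3) := fn_add_two (m + 3)
  have f6 : fn (m + 6) = fn (m + 5) + fn (m + 4) := fn_add_two (m + 4)
  have f0 := fn_pos m
  have hw' : w = fibFactor (fn (m + 2) + i - 2) (fn (m + 1)) :=
    hw.trans (kerW_rotation_eq_fibFactor h2 hi)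
  have hsq : w ++ w = fibFactor (fn (m + 2) + i - 2) (2 * fn (m + 1)) := by
    rw [hw']
    exact fibFactor_append_self (k := m + 1) (by show fn (m + 2) ≤ _; omega)
      (by show _ ≤ fn (m + 4); omega)
  refine ⟨by simp [hw'], hsq.trans ?_, hsq ▸ isFactorF_fibFactor _ _⟩
  rw [sliceF_kerW (by omega) (by omega),
    ← fibFactor_fn_succ_add (k := m + 5) (by show _ ≤ fn (m + 5); omega)]
  congr 1 <;> omega

/-- Case 2 squares: for `m ≥ 1` and `f_m + 1 ≤ i ≤ f_{m+1} + 1`, the word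
`w = K_{m+1}[i,f_{m+1}] · K_m · K_{m+1}[1,i-f_m-1]` has length `f_{m+1}`, and
`ww = K_{m+5}[f_{m+2}+i, f_{m+3}+f_{m+1}+i-1]`; in particular `ww` is a factor of `F`. -/
theorem square_case_two (m i : ℕ) (hm : 1 ≤ m)
    (h2 : fn m + 1 ≤ i) (hi : i ≤ fn (m + 1) + 1)
    (w : List Bool)
    (hw : w = sliceF (kerW (m + 1)) i (fn (m + 1)) ++ kerW m ++
        sliceF (kerW (m + 1)) 1 (i - fn m - 1)) :
    w.length = fn (m + 1) ∧
    w ++ w = sliceF (kerW (m + 5)) (fn (m + 2) + i) (fn (m + 3) + fn (m + 1) + i - 1) ∧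
    IsFactorF (w ++ w) :=
  square_case_two_general m i h2 hi w hw
end

section
/- For every position i ≥ 1 of the Fibonacci word F there exists m ∈ {0,1,2,3} such that a square of length 2f_m begins at position i, i.e., F[i; f_m] = F[i+f_m; f_m]. In particular, every position of F starts a square. -/
lemma getD_take' {l : List Bool} {n t : ℕ} {d : Bool} (h : t < n) :
    (l.take n).getD t d = l.getD t d := by
  rcases Nat.lt_or_ge t l.length with h1 | h1
  · rw [List.getD_eq_getElem _ _ h1,
      List.getD_eq_getElem _ _ (by simp; omega), List.getElem_take]
  · rw [List.getD_eq_default _ _ (by simp; omega), List.getD_eq_default _ _ h1]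

lemma getD_append_right' {l l' : List Bool} {n : ℕ} {d : Bool} (h : l.length ≤ n) :
    (l ++ l').getD n d = l'.getD (n - l.length) d := by
  rcases Nat.lt_or_ge n (l.length + l'.length) with h1 | h1
  · rw [List.getD_eq_getElem _ _ (by simp; omega),
      List.getD_eq_getElem _ _ (by omega), List.getElem_append_right h]
  · rw [List.getD_eq_default _ _ (by simp; omega), List.getD_eq_default _ _ (by omega)]

lemma fw_length : ∀ m, (Fw m).length = fn m
  | 0 => rfl
  | 1 => rfl
  | m+2 => by
    simp only [Fw, List.length_append, fw_length (m+1), fw_length m, fn, Nat.fib_add_two]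
    omega

lemma fn_add (m : ℕ) : fn (m+2) = fn (m+1) + fn m := by
  simp only [fn, Nat.fib_add_two]
  omega

lemma fn_ge (k : ℕ) : k + 1 ≤ fn k := by
  induction k with
  | zero => simp [fn]
  | succ n ih =>
    have h1 : 1 ≤ Nat.fib (n+1) := Nat.fib_pos.2 (by omega)
    have h2 : fn (n+1) = fn n + Nat.fib (n+1) := by
      simp only [fn, Nat.fib_add_two]; omega
    omega

lemma fn_mono : Monotone fn := fun a b h => Nat.fib_mono (by omega)

lemma fw_prefix_succ : ∀ m, Fw m <+: Fw (m+1)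
  | 0 => ⟨[true], rfl⟩
  | m+1 => ⟨Fw m, rfl⟩

lemma fw_prefix {m n : ℕ} (h : m ≤ n) : Fw m <+: Fw n := by
  induction n with
  | zero => simp [Nat.le_zero.1 h]
  | succ k ih =>
    rcases Nat.lt_or_ge m (k+1) with h1 | h1
    · exact (ih (by omega)).trans (fw_prefix_succ k)
    · have : m = k+1 := by omega
      simp [this]

lemma fibWord_eq {n j : ℕ} (h : j < fn n) : fibWord j = (Fw n).getD j false := by
  unfold fibWord
  rcases Nat.le_or_le n (j+1) with h1 | h1
  · obtain ⟨s, hs⟩ := fw_prefix h1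
    rw [← hs, List.getD_append]
    rw [fw_length]; exact h
  · obtain ⟨s, hs⟩ := fw_prefix h1
    rw [← hs, List.getD_append]
    rw [fw_length]
    have := fn_ge (j+1)
    omega

lemma fw_swap : ∀ m, (Fw (m+1) ++ Fw m).take (fn (m+2) - 2)
    = (Fw m ++ Fw (m+1)).take (fn (m+2) - 2)
  | 0 => by decide
  | 1 => by decide
  | m+2 => by
    have ih : (Fw (m+2) ++ Fw (m+1)).take (fn (m+3) - 2)
        = (Fw (m+1) ++ Fw (m+2)).take (fn (m+3) - 2) := fw_swap (m+1)
    have e1 : Fw (m+3) ++ Fw (m+2) = Fw (m+2) ++ (Fw (m+1) ++ Fw (m+2)) := by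
      show (Fw (m+2) ++ Fw (m+1)) ++ Fw (m+2) = _
      simp [List.append_assoc]
    have e2 : Fw (m+2) ++ Fw (m+3) = Fw (m+2) ++ (Fw (m+2) ++ Fw (m+1)) := rfl
    have e4 : fn (m+2+2) = fn (m+3) + fn (m+2) := fn_add (m+2)
    have e3 : fn (m+3) = fn (m+2) + fn (m+1) := fn_add (m+1)
    have hge := fn_ge (m+1)
    rw [e1, e2, List.take_append,
      List.take_append (l₁ := Fw (m+2))]
    have hlen : (Fw (m+2)).length = fn (m+2) := fw_length _
    rw [List.take_of_length_le (by omega), hlen]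
    have h3 : fn (m+2+2) - 2 - fn (m+2) = fn (m+3) - 2 := by omega
    rw [h3, ih]

lemma fib_shift {m t : ℕ} (ht : t + 2 < fn (m+2)) : fibWord (fn (m+1) + t) = fibWord t := by
  have e3 : fn (m+3) = fn (m+2) + fn (m+1) := fn_add (m+1)
  have e2 : fn (m+2) = fn (m+1) + fn m := fn_add m
  have h1 : fn (m+1) + t < fn (m+3) := by omega
  rw [fibWord_eq (n := m+3) h1, fibWord_eq (n := m+2) (by omega)]
  have e : Fw (m+3) = Fw (m+1) ++ (Fw m ++ Fw (m+1)) := by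
    show (Fw (m+1) ++ Fw m) ++ Fw (m+1) = _
    simp [List.append_assoc]
  have hlen1 : (Fw (m+1)).length = fn (m+1) := fw_length _
  rw [e, getD_append_right' (by omega), hlen1, Nat.add_sub_cancel_left]
  rw [← getD_take' (show t < fn (m+2) - 2 by omega), ← fw_swap m,
    getD_take' (show t < fn (m+2) - 2 by omega)]
  rfl

lemma fFactor_eq_take {N i n : ℕ} (hi : 1 ≤ i) (h : i - 1 + n ≤ fn N) :
    fFactor i n = ((Fw N).drop (i-1)).take n := by
  apply List.ext_getElem
  · simp [fFactor, fw_length]; omega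
  · intro t h1 h2
    simp only [fFactor, List.length_map, List.length_range] at h1
    simp only [fFactor, List.getElem_map, List.getElem_range, List.getElem_take,
      List.getElem_drop]
    rw [fibWord_eq (n := N) (by omega)]
    rw [List.getD_eq_getElem _ _ (by rw [fw_length]; omega)]

/-- Every position of the Fibonacci word starts a square of length `2f_m`
for some `m ∈ {0,1,2,3}`. -/
theorem every_position_starts_a_square (i : ℕ) (hi : 1 ≤ i) :
    ∃ m, m ≤ 3 ∧ fFactor i (fn m) = fFactor (i + fn m) (fn m) := by
  induction i using Nat.strong_induction_on with
  | _ i IH =>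
  rcases Nat.lt_or_ge i 14 with hlt | hge
  · -- base case: check directly
    have base : ∀ j < 14, 1 ≤ j → ∃ m, m ≤ 3 ∧
        ((Fw 8).drop (j-1)).take (fn m) = ((Fw 8).drop (j-1+fn m)).take (fn m) := by decide
    obtain ⟨m, hm, heq⟩ := base i hlt hi
    refine ⟨m, hm, ?_⟩
    have hfn : fn m ≤ 5 := le_trans (fn_mono hm) (by norm_num [fn])
    have h55 : fn 8 = 55 := by norm_num [fn]
    rw [fFactor_eq_take (N := 8) hi (by omega),
        fFactor_eq_take (N := 8) (by omega) (by omega)]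
    have he : i + fn m - 1 = i - 1 + fn m := by omega
    rw [he, heq]
  · -- inductive step
    have hj : 13 ≤ i - 1 := by omega
    set j := i - 1 with hjdef
    have hex : ∃ k, j < fn k := ⟨j, by have := fn_ge j; omega⟩
    have hKlt : j < fn (Nat.find hex) := Nat.find_spec hex
    have hKpos : 5 < Nat.find hex := by
      by_contra h
      have h5 : fn (Nat.find hex) ≤ fn 5 := fn_mono (by omega)
      have h13 : fn 5 = 13 := by norm_num [fn]
      omega
    obtain ⟨m, hKm⟩ : ∃ m, Nat.find hex = m + 2 := ⟨Nat.find hex - 2, by omega⟩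
    rw [hKm] at hKlt
    have hm4 : 4 ≤ m := by omega
    have hle : fn (m+1) ≤ j := by
      by_contra h
      have := Nat.find_min hex (show m+1 < Nat.find hex by omega)
      omega
    have hf13 : 13 ≤ fn (m+1) := by
      have h1 : fn 5 ≤ fn (m+1) := fn_mono (by omega)
      have h2 : fn 5 = 13 := by norm_num [fn]
      omega
    have hshift : ∀ t < 10, fibWord (j + t) = fibWord (j - fn (m+1) + t) := by
      intro t ht
      have h1 : j + t = fn (m+1) + (j - fn (m+1) + t) := by omega
      rw [h1]
      apply fib_shift
      have e2 : fn (m+2) = fn (m+1) + fn m := fn_add m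
      omega
    set i' := j - fn (m+1) + 1 with hi'
    have hi'pos : 1 ≤ i' := by omega
    have hi'lt : i' < i := by have := fn_pos (m+1); omega
    obtain ⟨m0, hm0, heq⟩ := IH i' hi'lt hi'pos
    have hfn0 : fn m0 ≤ 5 := le_trans (fn_mono hm0) (by norm_num [fn])
    refine ⟨m0, hm0, ?_⟩
    have e1 : fFactor i (fn m0) = fFactor i' (fn m0) := by
      apply List.map_congr_left
      intro t ht
      rw [List.mem_range] at ht
      have h1 : i - 1 + t = j + t := by omega
      rw [h1, hshift t (by omega)]
      have h2 : j - fn (m+1) + t = i' - 1 + t := by omega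
      rw [h2]
    have e2 : fFactor (i + fn m0) (fn m0) = fFactor (i' + fn m0) (fn m0) := by
      apply List.map_congr_left
      intro t ht
      rw [List.mem_range] at ht
      have h1 : i + fn m0 - 1 + t = j + (fn m0 + t) := by omega
      rw [h1, hshift _ (by omega)]
      have h2 : j - fn (m+1) + (fn m0 + t) = i' + fn m0 - 1 + t := by omega
      rw [h2]
    rw [e1, e2, heq]
end
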